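/- For h ∈ ℝ and δ > 0, ∫_{−∞}^{h} [φ(x) − (φ(h)/Φ(h)) e^{−2δh − 3δ²/2 + δx} Φ(x − δ)] dx = Φ(h) − (1/Φ(h)) · (φ(h)/δ) [e^{−δh − 3δ²/2} Φ(h − δ) − e^{−2δh} Φ(h − 2δ)]. -/

import Mathlib

/-!
Completing the square gives `e^{ax} φ(x - b) = e^{ab + a²/2} φ(x - a - b)`, so
`(e^{ax} Φ(x - b) - e^{ab + a²/2} Φ(x - a - b)) / a` is a primitive of `e^{ax} Φ(x - b)`; for
`a > 0` it vanishes at `-∞`. With `a = b = δ` this evaluates the second part of the integrand,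
the first part integrating to `Φ(h)` by definition.
-/

open MeasureTheory Set

/-- Standard normal density. -/
noncomputable def stdGaussPDF (x : ℝ) : ℝ :=
  (Real.sqrt (2 * Real.pi))⁻¹ * Real.exp (-x ^ 2 / 2)

/-- Standard normal c.d.f. `Φ`. -/
noncomputable def stdGaussCDF (t : ℝ) : ℝ := ∫ x in Set.Iic t, stdGaussPDF x

open Filter Topology ProbabilityTheory

theorem hasDerivAt_integral_Iic {E : Type*} [NormedAddCommGroup E] [NormedSpace ℝ E]
    [CompleteSpace E] {f : ℝ → E} (hf : Integrable f) {x : ℝ} (hx : ContinuousAt f x) :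
    HasDerivAt (fun t ↦ ∫ u in Iic t, f u) (f x) x := by
  have hsplit : (fun t ↦ ∫ u in Iic t, f u) = fun t ↦ (∫ u in Iic 0, f u) + ∫ u in 0..t, f u := by
    ext t
    rw [← intervalIntegral.integral_Iic_sub_Iic hf.integrableOn hf.integrableOn, add_sub_cancel]
  rw [hsplit]
  exact (intervalIntegral.integral_hasDerivAt_right hf.intervalIntegrable
    hf.aestronglyMeasurable.stronglyMeasurableAtFilter hx).const_add _

lemma stdGaussPDF_eq_gaussianPDFReal : stdGaussPDF = gaussianPDFReal 0 1 := by
  ext x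
  simp [stdGaussPDF, gaussianPDFReal, neg_div]

lemma stdGaussCDF_eq_cdf_gaussianReal : stdGaussCDF = cdf (gaussianReal 0 1) := by
  ext t
  rw [cdf_eq_real, measureReal_def, gaussianReal_apply_eq_integral _ one_ne_zero,
    ENNReal.toReal_ofReal (setIntegral_nonneg measurableSet_Iic
      fun x _ ↦ gaussianPDFReal_nonneg 0 1 x), stdGaussCDF, stdGaussPDF_eq_gaussianPDFReal]

lemma integrable_stdGaussPDF : Integrable stdGaussPDF :=
  stdGaussPDF_eq_gaussianPDFReal ▸ integrable_gaussianPDFReal 0 1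

lemma continuous_stdGaussPDF : Continuous stdGaussPDF := by
  unfold stdGaussPDF
  fun_prop

lemma stdGaussCDF_nonneg (t : ℝ) : 0 ≤ stdGaussCDF t :=
  stdGaussCDF_eq_cdf_gaussianReal ▸ cdf_nonneg _ t

lemma stdGaussCDF_le_one (t : ℝ) : stdGaussCDF t ≤ 1 :=
  stdGaussCDF_eq_cdf_gaussianReal ▸ cdf_le_one _ t

lemma tendsto_stdGaussCDF_atBot : Tendsto stdGaussCDF atBot (𝓝 0) :=
  stdGaussCDF_eq_cdf_gaussianReal ▸ tendsto_cdf_atBot _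

lemma hasDerivAt_stdGaussCDF (x : ℝ) : HasDerivAt stdGaussCDF (stdGaussPDF x) x :=
  hasDerivAt_integral_Iic integrable_stdGaussPDF continuous_stdGaussPDF.continuousAt

@[fun_prop]
lemma continuous_stdGaussCDF : Continuous stdGaussCDF :=
  continuous_iff_continuousAt.2 fun x ↦ (hasDerivAt_stdGaussCDF x).continuousAt

lemma exp_mul_stdGaussPDF_sub (a b x : ℝ) :
    Real.exp (a * x) * stdGaussPDF (x - b) =
      Real.exp (a * b + a ^ 2 / 2) * stdGaussPDF (x - a - b) := by
  simp only [stdGaussPDF]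
  rw [mul_left_comm, ← Real.exp_add, mul_left_comm (Real.exp _), ← Real.exp_add]
  ring_nf

lemma hasDerivAt_primitive_exp_mul_stdGaussCDF {a : ℝ} (ha : a ≠ 0) (b x : ℝ) :
    HasDerivAt
      (fun y ↦ (Real.exp (a * y) * stdGaussCDF (y - b)
        - Real.exp (a * b + a ^ 2 / 2) * stdGaussCDF (y - a - b)) / a)
      (Real.exp (a * x) * stdGaussCDF (x - b)) x := by
  have hexp : HasDerivAt (fun y ↦ Real.exp (a * y)) (Real.exp (a * x) * a) x := by
    simpa using ((hasDerivAt_id x).const_mul a).exp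
  have hΦ₁ := (hasDerivAt_stdGaussCDF (x - b)).comp_sub_const x b
  have hΦ₂ := ((hasDerivAt_stdGaussCDF (x - a - b)).comp_sub_const (x - a) b).comp_sub_const x a
  refine (((hexp.mul hΦ₁).sub (hΦ₂.const_mul _)).div_const a).congr_deriv ?_
  rw [exp_mul_stdGaussPDF_sub]
  field_simp
  ring

lemma integrableOn_exp_mul_stdGaussCDF {a : ℝ} (ha : 0 < a) (b c : ℝ) :
    IntegrableOn (fun x ↦ Real.exp (a * x) * stdGaussCDF (x - b)) (Iic c) := by
  refine (integrableOn_exp_mul_Iic ha c).mono' (by fun_prop) (ae_of_all _ fun x ↦ ?_)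
  rw [norm_mul, Real.norm_of_nonneg (Real.exp_pos _).le,
    Real.norm_of_nonneg (stdGaussCDF_nonneg _)]
  exact mul_le_of_le_one_right (Real.exp_pos _).le (stdGaussCDF_le_one _)

lemma tendsto_exp_mul_stdGaussCDF_atBot {a : ℝ} (ha : 0 < a) (b : ℝ) :
    Tendsto (fun x ↦ Real.exp (a * x) * stdGaussCDF (x - b)) atBot (𝓝 0) := by
  have hexp : Tendsto (fun x ↦ Real.exp (a * x)) atBot (𝓝 0) :=
    Real.tendsto_exp_atBot.comp (tendsto_id.const_mul_atBot ha)
  exact squeeze_zero (fun x ↦ mul_nonneg (Real.exp_pos _).le (stdGaussCDF_nonneg _))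
    (fun x ↦ mul_le_of_le_one_right (Real.exp_pos _).le (stdGaussCDF_le_one _)) hexp

theorem setIntegral_exp_mul_stdGaussCDF {a : ℝ} (ha : 0 < a) (b c : ℝ) :
    ∫ x in Iic c, Real.exp (a * x) * stdGaussCDF (x - b) =
      (Real.exp (a * c) * stdGaussCDF (c - b)
        - Real.exp (a * b + a ^ 2 / 2) * stdGaussCDF (c - a - b)) / a := by
  have hlim : Tendsto (fun y ↦ (Real.exp (a * y) * stdGaussCDF (y - b)
      - Real.exp (a * b + a ^ 2 / 2) * stdGaussCDF (y - a - b)) / a) atBot (𝓝 0) := by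
    have hΦ : Tendsto (fun y ↦ stdGaussCDF (y - a - b)) atBot (𝓝 0) :=
      tendsto_stdGaussCDF_atBot.comp (tendsto_atBot_add_const_right _ _
        (tendsto_atBot_add_const_right _ _ tendsto_id))
    simpa using ((tendsto_exp_mul_stdGaussCDF_atBot ha b).sub (hΦ.const_mul _)).div_const a
  rw [integral_Iic_of_hasDerivAt_of_tendsto'
    (fun x _ ↦ hasDerivAt_primitive_exp_mul_stdGaussCDF ha.ne' b x)
    (integrableOn_exp_mul_stdGaussCDF ha b c) hlim, sub_zero]

/-- The normalizing constant `c₁ = ∫_{−∞}^h p̃₁(x) dx = Φ(h) − κ_{h,δ}/Φ(h)`, where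
`κ_{h,δ} = (φ(h)/δ)[e^{−δh−3δ²/2}Φ(h−δ) − e^{−2δh}Φ(h−2δ)]`. -/
theorem c_one_formula (h δ : ℝ) (hδ : 0 < δ) :
    ∫ x in Set.Iic h,
        (stdGaussPDF x
          - stdGaussPDF h / stdGaussCDF h *
              Real.exp (-2 * δ * h - 3 * δ ^ 2 / 2 + δ * x) * stdGaussCDF (x - δ))
      = stdGaussCDF h
        - (1 / stdGaussCDF h) * (stdGaussPDF h / δ) *
            (Real.exp (-δ * h - 3 * δ ^ 2 / 2) * stdGaussCDF (h - δ)
              - Real.exp (-2 * δ * h) * stdGaussCDF (h - 2 * δ)) := by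
  set C := stdGaussPDF h / stdGaussCDF h * Real.exp (-2 * δ * h - 3 * δ ^ 2 / 2)
  have hintegrand (x : ℝ) : stdGaussPDF h / stdGaussCDF h *
      Real.exp (-2 * δ * h - 3 * δ ^ 2 / 2 + δ * x) * stdGaussCDF (x - δ) =
        C * (Real.exp (δ * x) * stdGaussCDF (x - δ)) := by
    rw [Real.exp_add]; ring
  simp_rw [hintegrand]
  rw [integral_sub integrable_stdGaussPDF.integrableOn
    ((integrableOn_exp_mul_stdGaussCDF hδ δ h).const_mul C), integral_const_mul,
    setIntegral_exp_mul_stdGaussCDF hδ, ← stdGaussCDF, show h - δ - δ = h - 2 * δ by ring]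
  have e₁ : Real.exp (-δ * h - 3 * δ ^ 2 / 2) =
      Real.exp (-2 * δ * h - 3 * δ ^ 2 / 2) * Real.exp (δ * h) := by
    rw [← Real.exp_add]; ring_nf
  have e₂ : Real.exp (-2 * δ * h) =
      Real.exp (-2 * δ * h - 3 * δ ^ 2 / 2) * Real.exp (δ * δ + δ ^ 2 / 2) := by
    rw [← Real.exp_add]; ring_nf
  rw [e₁, e₂]
  ring
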